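/- arXiv:2406.18260 — 2 statements merged into one kernel-verified Lean document; each statement's English description precedes it below -/
import Mathlib

section
/- Let D be a partially ordered set and Φ a monotone operator on D → ℝ̄ (pointwise order) on a complete lattice, and suppose D = D₁ ⊔ D₂. Let g : D₁ → ℝ̄ satisfy g ≥ (lfp Φ) restricted to D₁. Define Φ̃(f)(n) = min(Φ(f)(n), g(n)) for n ∈ D₁ and Φ̃(f)(n) = Φ(f)(n) for n ∈ D₂. Then Φ̃ is monotone and lfp Φ̃ = lfp Φ. -/
theorem stmt_13 {D : Type*} (D₁ : Set D) [DecidablePred (· ∈ D₁)]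
    (Φ : (D → EReal) → (D → EReal)) (hΦ : Monotone Φ)
    (g : D → EReal)
    (hg : ∀ n ∈ D₁, OrderHom.lfp ⟨Φ, hΦ⟩ n ≤ g n) :
    ∃ h : Monotone (fun (f : D → EReal) (n : D) =>
        if n ∈ D₁ then min (Φ f n) (g n) else Φ f n),
      OrderHom.lfp ⟨fun (f : D → EReal) (n : D) =>
        if n ∈ D₁ then min (Φ f n) (g n) else Φ f n, h⟩ = OrderHom.lfp ⟨Φ, hΦ⟩ := by
  have hmono : Monotone (fun (f : D → EReal) (n : D) =>
      if n ∈ D₁ then min (Φ f n) (g n) else Φ f n) := by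
    intro f₁ f₂ hf n
    by_cases hn : n ∈ D₁ <;> simp only [hn, if_true, if_false]
    · exact min_le_min (hΦ hf n) le_rfl
    · exact hΦ hf n
  refine ⟨hmono, ?_⟩
  set Φ' : (D → EReal) →o (D → EReal) := ⟨fun f n =>
      if n ∈ D₁ then min (Φ f n) (g n) else Φ f n, hmono⟩ with hΦ'
  set ΦO : (D → EReal) →o (D → EReal) := ⟨Φ, hΦ⟩ with hΦO
  set L := OrderHom.lfp ΦO with hL
  set L' := OrderHom.lfp Φ' with hL'
  have hLfix : ΦO L = L := ΦO.map_lfp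
  have hL'fix : Φ' L' = L' := Φ'.map_lfp
  have h1 : L' ≤ L := by
    apply OrderHom.lfp_le
    intro n
    by_cases hn : n ∈ D₁
    · simp only [hΦ', OrderHom.coe_mk, hn, if_true]
      exact le_trans (min_le_left _ _) (le_of_eq (congrFun hLfix n))
    · simp only [hΦ', OrderHom.coe_mk, hn, if_false]
      exact le_of_eq (congrFun hLfix n)
  have h2 : L ≤ L' := by
    apply OrderHom.lfp_le
    intro n
    have key : Φ L' n ≤ L' n := by
      by_cases hn : n ∈ D₁
      · have hle : Φ L' n ≤ g n :=
          le_trans (le_trans (hΦ h1 n) (le_of_eq (congrFun hLfix n))) (hg n hn)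
        have : L' n = min (Φ L' n) (g n) := by
          conv_lhs => rw [← hL'fix]
          simp [hΦ', hn]
        rw [this]
        exact le_min le_rfl hle
      · have : L' n = Φ L' n := by
          conv_lhs => rw [← hL'fix]
          simp [hΦ', hn]
        rw [this]
    exact key
  exact le_antisymm h1 h2
end

section
/- Hybrid verification: let Φ be a monotone operator on the complete lattice D → ℝ̄, D = D₁ ⊔ D₂, and f : D → ℝ̄. If (lfp Φ)(n) ≤ f(n) for all n ∈ D₁, and Φ(f)(n) ≤ f(n) for all n ∈ D₂, then (lfp Φ)(n) ≤ f(n) for all n ∈ D. -/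
theorem stmt_14 {D : Type*} (D₁ D₂ : Set D)
    (hdisj : Disjoint D₁ D₂) (hcover : D₁ ∪ D₂ = Set.univ)
    (Φ : (D → EReal) → (D → EReal)) (hΦ : Monotone Φ)
    (f : D → EReal)
    (h1 : ∀ n ∈ D₁, OrderHom.lfp ⟨Φ, hΦ⟩ n ≤ f n)
    (h2 : ∀ n ∈ D₂, Φ f n ≤ f n) :
    ∀ n : D, OrderHom.lfp ⟨Φ, hΦ⟩ n ≤ f n := by
  set L : D → EReal := OrderHom.lfp ⟨Φ, hΦ⟩ with hL
  have hfix : Φ L = L := OrderHom.map_lfp ⟨Φ, hΦ⟩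
  set g : D → EReal := L ⊓ f with hg
  have hgL : g ≤ L := inf_le_left
  have hgf : g ≤ f := inf_le_right
  have hΦg : Φ g ≤ g := by
    intro n
    have hnL : Φ g n ≤ L n := by
      calc Φ g n ≤ Φ L n := hΦ hgL n
        _ = L n := by rw [hfix]
    have hn : n ∈ D₁ ∪ D₂ := by rw [hcover]; trivial
    rcases hn with hn | hn
    · have : g n = L n := inf_eq_left.mpr (h1 n hn)
      simpa [this] using hnL
    · have hnf : Φ g n ≤ f n := le_trans (hΦ hgf n) (h2 n hn)
      exact le_inf hnL hnf
  have : L ≤ g := OrderHom.lfp_le ⟨Φ, hΦ⟩ hΦg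
  exact fun n => le_trans (this n) (hgf n)
end
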